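/- arXiv:math/0405019 — 2 statements merged into one kernel-verified Lean document; each statement's English description precedes it below -/
import Mathlib

section
/- For a lattice L in ℝ² (a discrete cocompact subgroup of rank 2) with λ₁(L) the least Euclidean norm of a nonzero lattice vector, one has λ₁(L)² ≤ (2/√3) · covol(L), where covol(L) is the area of a fundamental domain; equivalently the Hermite constant γ₂ equals 2/√3, attained by the hexagonal lattice. -/
/-!
Let `v` be a shortest nonzero vector of `L` and `u` a shortest vector of `L` off the line `ℝv`.
Comparing `u` with `u ± v` gives `2|⟪v, u⟫| ≤ ‖v‖²`, and the same two minimality properties show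
that `v, u` is a `ℤ`-basis of `L`: after rounding coordinates, a lattice vector `αv + βu` with
`|α|, |β| ≤ 1/2` has `‖αv + βu‖² ≤ ¾‖u‖²` (or is a short multiple of `v` when `β = 0`), so it is
zero. Hence `covol L = |ω(v, u)|` for the area form `ω`, and
`ω(v, u)² = ‖v‖²‖u‖² - ⟪v, u⟫² ≥ ‖v‖⁴ - ‖v‖⁴/4 = ¾‖v‖⁴`.
-/

open scoped RealInnerProductSpace

open MeasureTheory Module Submodule

theorem le_two_div_sqrt_three_mul_abs {x y : ℝ} (hx : 0 ≤ x) (h : 3 * x ^ 2 ≤ 4 * y ^ 2) :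
    x ≤ 2 / √3 * |y| := by
  have h3 : (0 : ℝ) < √3 := by positivity
  have hsq : (√3 * x) ^ 2 ≤ (2 * |y|) ^ 2 := by
    rw [mul_pow, mul_pow, Real.sq_sqrt (by norm_num), sq_abs]; linarith
  rw [div_mul_eq_mul_div, le_div_iff₀ h3, mul_comm]
  exact pow_le_pow_iff_left₀ (by positivity) (by positivity) two_ne_zero |>.1 hsq

section Normed

variable {E : Type*} [NormedAddCommGroup E]

namespace ZLattice

theorem exists_mem_forall_norm_le [ProperSpace E] (L : Submodule ℤ E) [DiscreteTopology L]
    {P : E → Prop} (h : ∃ w ∈ L, P w) : ∃ v ∈ L, P v ∧ ∀ w ∈ L, P w → ‖v‖ ≤ ‖w‖ := by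
  obtain ⟨w₀, hw₀L, hw₀P⟩ := h
  have : DiscreteTopology L.toAddSubgroup := ‹DiscreteTopology L›
  have hfin : (Metric.closedBall 0 ‖w₀‖ ∩ (L.toAddSubgroup : Set E) ∩ {x | P x}).Finite :=
    (Metric.finite_isBounded_inter_isClosed DiscreteTopology.isDiscrete
      Metric.isBounded_closedBall AddSubgroup.isClosed_of_discrete).inter_of_left _
  obtain ⟨v, ⟨⟨hvw₀, hvL⟩, hvP⟩, hmin⟩ :=
    Set.exists_min_image _ (‖·‖) hfin ⟨w₀, ⟨by simp, hw₀L⟩, hw₀P⟩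
  refine ⟨v, hvL, hvP, fun w hwL hwP => ?_⟩
  rcases le_total ‖w‖ ‖w₀‖ with hw | hw
  · exact hmin w ⟨⟨by simpa using hw, hwL⟩, hwP⟩
  · exact (mem_closedBall_zero_iff.1 hvw₀).trans hw

theorem exists_mem_notMem_span_singleton [Module ℝ E] (L : Submodule ℤ E)
    (h : 1 < finrank ℝ (span ℝ (L : Set E))) (x : E) : ∃ w ∈ L, w ∉ ℝ ∙ x := by
  by_contra! hL
  have := (finrank_mono (span_le.2 hL)).trans (finrank_span_le_card (R := ℝ) ({x} : Set E))
  simp only [Set.toFinset_singleton, Finset.card_singleton] at this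
  omega

end ZLattice

end Normed

variable {E : Type*} [NormedAddCommGroup E] [InnerProductSpace ℝ E]

theorem two_mul_abs_inner_le_of_norm_le {u v : E} (hsub : ‖u‖ ≤ ‖u - v‖)
    (hadd : ‖u‖ ≤ ‖u + v‖) : 2 * |⟪v, u⟫| ≤ ‖v‖ ^ 2 := by
  have hsub' := pow_le_pow_left₀ (norm_nonneg u) hsub 2
  have hadd' := pow_le_pow_left₀ (norm_nonneg u) hadd 2
  rw [norm_sub_sq_real] at hsub'
  rw [norm_add_sq_real] at hadd'
  rw [real_inner_comm]
  cases abs_cases ⟪u, v⟫ <;> linarith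

namespace ZLattice

theorem covolume_span_eq_abs_volumeForm [FiniteDimensional ℝ E] [MeasurableSpace E]
    [BorelSpace E] {n : ℕ} [Fact (finrank ℝ E = n)] (o : Orientation ℝ E (Fin n))
    (b : Basis (Fin n) ℝ E) :
    covolume (span ℤ (Set.range b)) = |o.volumeForm b| := by
  rw [covolume_eq_measure_fundamentalDomain _ volume (ZSpan.isAddFundamentalDomain b volume),
    measureReal_congr (ZSpan.fundamentalDomain_ae_parallelepiped b volume), ← o.measure_eq_volume,
    measureReal_def, AlternatingMap.measure_parallelepiped, ENNReal.toReal_ofReal (abs_nonneg _)]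

structure IsSuccessiveMinimaPair (L : Submodule ℤ E) (v u : E) : Prop where
  left_mem : v ∈ L
  right_mem : u ∈ L
  left_ne_zero : v ≠ 0
  right_notMem_span : u ∉ ℝ ∙ v
  norm_left_le : ∀ w ∈ L, w ≠ 0 → ‖v‖ ≤ ‖w‖
  norm_right_le : ∀ w ∈ L, w ∉ ℝ ∙ v → ‖u‖ ≤ ‖w‖

namespace IsSuccessiveMinimaPair

variable {L : Submodule ℤ E} {v u : E} (h : IsSuccessiveMinimaPair L v u)
include h

theorem right_ne_zero : u ≠ 0 := fun hu => h.right_notMem_span (hu ▸ zero_mem _)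

theorem norm_left_le_norm_right : ‖v‖ ≤ ‖u‖ := h.norm_left_le u h.right_mem h.right_ne_zero

theorem two_mul_abs_inner_le : 2 * |⟪v, u⟫| ≤ ‖v‖ ^ 2 := by
  have hv : v ∈ ℝ ∙ v := mem_span_singleton_self v
  refine two_mul_abs_inner_le_of_norm_le (h.norm_right_le _ (sub_mem h.right_mem h.left_mem) ?_)
    (h.norm_right_le _ (add_mem h.right_mem h.left_mem) ?_)
  · exact fun hs => h.right_notMem_span (by simpa using add_mem hs hv)
  · exact fun hs => h.right_notMem_span (by simpa using sub_mem hs hv)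

theorem linearIndependent : LinearIndependent ℝ ![v, u] :=
  (LinearIndependent.pair_iff' h.left_ne_zero).2 fun a hau =>
    h.right_notMem_span (mem_span_singleton.2 ⟨a, hau⟩)

theorem smul_add_smul_eq_zero {α β : ℝ} (hα : |α| ≤ 1 / 2) (hβ : |β| ≤ 1 / 2)
    (hL : α • v + β • u ∈ L) : α • v + β • u = 0 := by
  by_cases hβ0 : β = 0
  · subst hβ0
    by_contra hne
    have hle := h.norm_left_le _ hL hne
    rw [zero_smul, add_zero, norm_smul, Real.norm_eq_abs] at hle
    nlinarith [norm_pos_iff.2 h.left_ne_zero]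
  · have hnotMem : α • v + β • u ∉ ℝ ∙ v := fun hs => h.right_notMem_span <| by
      have := (ℝ ∙ v).smul_mem β⁻¹ (sub_mem hs ((ℝ ∙ v).smul_mem α (mem_span_singleton_self v)))
      rwa [add_sub_cancel_left, smul_smul, inv_mul_cancel₀ hβ0, one_smul] at this
    have hexpand : ‖α • v + β • u‖ ^ 2
        = α ^ 2 * ‖v‖ ^ 2 + 2 * (α * β) * ⟪v, u⟫ + β ^ 2 * ‖u‖ ^ 2 := by
      rw [norm_add_sq_real, norm_smul, norm_smul, real_inner_smul_left, real_inner_smul_right,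
        Real.norm_eq_abs, Real.norm_eq_abs, mul_pow, mul_pow, sq_abs, sq_abs]
      ring
    have hα2 : α ^ 2 ≤ 1 / 4 := by nlinarith [sq_abs α, abs_nonneg α]
    have hβ2 : β ^ 2 ≤ 1 / 4 := by nlinarith [sq_abs β, abs_nonneg β]
    have hcross : 2 * (α * β) * ⟪v, u⟫ ≤ ‖v‖ ^ 2 / 4 := by
      have hαβ : |α * β| ≤ 1 / 4 := by
        rw [abs_mul]; nlinarith [abs_nonneg α, abs_nonneg β]
      calc 2 * (α * β) * ⟪v, u⟫ ≤ |α * β| * (2 * |⟪v, u⟫|) := by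
            nlinarith [le_abs_self (α * β * ⟪v, u⟫), abs_mul (α * β) ⟪v, u⟫]
        _ ≤ 1 / 4 * ‖v‖ ^ 2 := mul_le_mul hαβ h.two_mul_abs_inner_le (by positivity) (by norm_num)
        _ = ‖v‖ ^ 2 / 4 := by ring
    have hvu := pow_le_pow_left₀ (norm_nonneg _) h.norm_left_le_norm_right 2
    have hu := pow_pos (norm_pos_iff.2 h.right_ne_zero) 2
    have hle := pow_le_pow_left₀ (norm_nonneg _) (h.norm_right_le _ hL hnotMem) 2
    exfalso
    nlinarith

theorem exists_int_eq_of_mem {a b : ℝ} (hL : a • v + b • u ∈ L) :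
    ∃ m n : ℤ, a • v + b • u = m • v + n • u := by
  refine ⟨round a, round b, ?_⟩
  have hfract : (a - round a) • v + (b - round b) • u
      = (a • v + b • u) - (round a • v + round b • u) := by
    simp only [sub_smul, ← Int.cast_smul_eq_zsmul ℝ]; abel
  have hmem : (a - round a) • v + (b - round b) • u ∈ L := hfract ▸
    sub_mem hL (add_mem (zsmul_mem h.left_mem _) (zsmul_mem h.right_mem _))
  rw [← sub_eq_zero, ← hfract]
  exact h.smul_add_smul_eq_zero (abs_sub_round a) (abs_sub_round b) hmem

theorem span_int_eq (hE : finrank ℝ E = 2) : span ℤ (Set.range ![v, u]) = L := by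
  refine le_antisymm (span_le.2 (Set.range_subset_iff.2 (Fin.forall_fin_two.2
    ⟨h.left_mem, h.right_mem⟩))) fun w hw => ?_
  have hspan := h.linearIndependent.span_eq_top_of_card_eq_finrank (by simp [hE])
  have hwR : w ∈ span ℝ (Set.range ![v, u]) := hspan ▸ mem_top
  obtain ⟨c, rfl⟩ := (mem_span_range_iff_exists_fun ℝ).1 hwR
  rw [Fin.sum_univ_two] at hw ⊢
  obtain ⟨m, n, hmn⟩ := h.exists_int_eq_of_mem hw
  simp only [Matrix.cons_val_zero, Matrix.cons_val_one] at hmn ⊢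
  rw [hmn, mem_span_range_iff_exists_fun ℤ]
  exact ⟨![m, n], by simp [Fin.sum_univ_two]⟩

theorem three_mul_norm_pow_four_le :
    3 * ‖v‖ ^ 4 ≤ 4 * (‖v‖ ^ 2 * ‖u‖ ^ 2 - ⟪v, u⟫ ^ 2) := by
  have hinner : 4 * ⟪v, u⟫ ^ 2 ≤ (‖v‖ ^ 2) ^ 2 := by
    rw [← sq_abs]; nlinarith [h.two_mul_abs_inner_le, abs_nonneg ⟪v, u⟫]
  have hvu : (‖v‖ ^ 2) ^ 2 ≤ ‖v‖ ^ 2 * ‖u‖ ^ 2 := by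
    rw [sq]; gcongr; exact h.norm_left_le_norm_right
  nlinarith

end IsSuccessiveMinimaPair

theorem exists_isSuccessiveMinimaPair [FiniteDimensional ℝ E] (L : Submodule ℤ E)
    [DiscreteTopology L] (hL : 1 < finrank ℝ (span ℝ (L : Set E))) :
    ∃ v u, IsSuccessiveMinimaPair L v u := by
  obtain ⟨v, hvL, hv0, hvmin⟩ := exists_mem_forall_norm_le L (P := (· ≠ 0)) <| by
    obtain ⟨w, hwL, hw⟩ := exists_mem_notMem_span_singleton L hL 0
    exact ⟨w, hwL, by rintro rfl; exact hw (zero_mem _)⟩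
  obtain ⟨u, huL, hu, humin⟩ :=
    exists_mem_forall_norm_le L (exists_mem_notMem_span_singleton L hL v)
  exact ⟨v, u, ⟨hvL, huL, hv0, hu, hvmin, humin⟩⟩

theorem exists_sq_norm_le_covolume [FiniteDimensional ℝ E] [MeasurableSpace E]
    [BorelSpace E] [Fact (finrank ℝ E = 2)] (L : Submodule ℤ E) [DiscreteTopology L]
    [IsZLattice ℝ L] :
    ∃ v ∈ L, v ≠ 0 ∧ ‖v‖ ^ 2 ≤ 2 / √3 * covolume L := by
  have hE : finrank ℝ E = 2 := Fact.out
  obtain ⟨v, u, h⟩ := exists_isSuccessiveMinimaPair L <| by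
    rw [IsZLattice.span_top, finrank_top, hE]; norm_num
  let o : Orientation ℝ E (Fin 2) := (finBasisOfFinrankEq ℝ E hE).orientation
  have hcov : covolume L = |o.areaForm v u| := by
    have hb := coe_basisOfLinearIndependentOfCardEqFinrank h.linearIndependent (by simp [hE])
    rw [← h.span_int_eq hE, ← hb, covolume_span_eq_abs_volumeForm o, hb, o.areaForm_to_volumeForm]
  refine ⟨v, h.left_mem, h.left_ne_zero,
    hcov ▸ le_two_div_sqrt_three_mul_abs (by positivity) ?_⟩
  have := o.inner_sq_add_areaForm_sq v u
  nlinarith [h.three_mul_norm_pow_four_le]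

end ZLattice

/-- Hermite's inequality in dimension 2: for a lattice `L ⊂ ℝ²`, the least
norm `λ₁(L)` of a nonzero vector satisfies `λ₁(L)² ≤ (2/√3)·covol(L)`. -/
theorem stmt_10 (L : Submodule ℤ (EuclideanSpace ℝ (Fin 2)))
    [DiscreteTopology L] [IsZLattice ℝ L] :
    (sInf {r : ℝ | ∃ v ∈ L, v ≠ 0 ∧ ‖v‖ = r}) ^ 2
      ≤ (2 / Real.sqrt 3) * ZLattice.covolume L := by
  have : Fact (finrank ℝ (EuclideanSpace ℝ (Fin 2)) = 2) := ⟨finrank_euclideanSpace_fin⟩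
  obtain ⟨v, hvL, hv0, hv⟩ := ZLattice.exists_sq_norm_le_covolume L
  have hnonneg : ∀ r ∈ {r : ℝ | ∃ v ∈ L, v ≠ 0 ∧ ‖v‖ = r}, 0 ≤ r := by
    rintro _ ⟨w, -, -, rfl⟩; exact norm_nonneg w
  calc _ ≤ ‖v‖ ^ 2 := pow_le_pow_left₀ (Real.sInf_nonneg hnonneg)
        (csInf_le ⟨0, hnonneg⟩ ⟨v, hvL, hv0, rfl⟩) 2
    _ ≤ _ := hv
end

section
/- John's theorem quantitative corollary: for any symmetric convex body K ⊂ ℝ^d with John ellipsoid E (the maximal volume ellipsoid inscribed in K), one has E ⊆ K ⊆ √d · E. -/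
/-!
If some `y ∈ K` had `‖T⁻¹ y‖ > √d`, pull everything back by `T`: the John ellipsoid becomes the
unit ball, and `x = T⁻¹ y` and `-x` lie in the pulled-back body. Multiplying by `a` along
`x / ‖x‖` and by `b` on its orthogonal complement, where `a² + b² (‖x‖² - 1) = ‖x‖²`, maps the
unit ball into the convex hull of the ball and `±x`. Taking `a² = 1 + ε (‖x‖² - 1)` and
`b² = 1 - ε` for small `ε`, Bernoulli's inequality shows `a b^(d-1) > 1` as soon as `‖x‖² > d`,
so this ellipsoid has larger volume than the ball, contradicting maximality.
-/

open Pointwise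

open MeasureTheory

open Metric Module
open scoped RealInnerProductSpace

lemma exists_pos_lt_one_one_lt_mul_one_sub_pow {A : ℝ} {n : ℕ} (hA : n < A) :
    ∃ ε : ℝ, 0 < ε ∧ ε < 1 ∧ 1 < (1 + ε * A) * (1 - ε) ^ n := by
  have hA0 : 0 < A := n.cast_nonneg.trans_lt hA
  set ε := (A - n) / (2 * A * (n + 1)) with hε
  have hε0 : 0 < ε := div_pos (sub_pos.2 hA) (by positivity)
  have hεA : 2 * A * (n + 1) * ε = A - n := by rw [hε]; field_simp
  have hε1 : ε < 1 := by rw [hε, div_lt_one (by positivity)]; nlinarith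
  have hbern : 1 - n * ε ≤ (1 - ε) ^ n := by
    simpa [sub_eq_add_neg] using one_add_mul_le_pow (a := -ε) (by linarith) n
  refine ⟨ε, hε0, hε1, ?_⟩
  calc 1 < (1 + ε * A) * (1 - n * ε) := by nlinarith [mul_pos hε0 hA0]
    _ ≤ (1 + ε * A) * (1 - ε) ^ n := by gcongr

/-- `μ` will be the weight of `±s u` when a point of the stretched ball is written as a convex
combination of `±s u` and a point of the unit ball. -/
lemma exists_abs_lt_one_sq_add_le {s a b w W : ℝ} (hs : 1 < s) (ha : 1 ≤ a) (hb : 0 < b)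
    (hab : a ^ 2 + b ^ 2 * (s ^ 2 - 1) = s ^ 2) (hW : 0 ≤ W) (hwW : w ^ 2 + W ≤ 1) :
    ∃ μ : ℝ, |μ| < 1 ∧ (a * w - μ * s) ^ 2 + b ^ 2 * W ≤ (1 - |μ|) ^ 2 := by
  wlog hw : 0 ≤ w generalizing w
  · obtain ⟨μ, hμ, hle⟩ := this (w := -w) (by simpa using hwW) (by linarith)
    refine ⟨-μ, by rwa [abs_neg], ?_⟩
    rw [abs_neg]
    convert hle using 2
    ring
  have hD : 0 < s ^ 2 - 1 := by nlinarith
  have has : a ^ 2 < s ^ 2 := by nlinarith [mul_pos (pow_pos hb 2) hD]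
  have hbW : b ^ 2 * W ≤ b ^ 2 * (1 - w ^ 2) := by gcongr; linarith
  rcases le_or_gt (s * w) 1 with hsw | hsw
  · refine ⟨0, by simp, ?_⟩
    have hb1 : b ^ 2 ≤ 1 := by nlinarith
    have hsw2 : s ^ 2 * w ^ 2 ≤ 1 := by nlinarith [mul_nonneg (by linarith : (0:ℝ) ≤ s) hw]
    have key : (a * w) ^ 2 + b ^ 2 * (1 - w ^ 2) = 1 - (1 - b ^ 2) * (1 - s ^ 2 * w ^ 2) := by
      linear_combination w ^ 2 * hab
    simp only [abs_zero, sub_zero, zero_mul]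
    nlinarith [mul_nonneg (sub_nonneg.2 hb1) (sub_nonneg.2 hsw2)]
  · have hw1 : w ≤ 1 := by nlinarith
    have hasw : a * w < s := by nlinarith
    set μ := (s * (a * w) - 1) / (s ^ 2 - 1) with hμ
    have hμ0 : 0 ≤ μ := div_nonneg (by nlinarith) hD.le
    have hμ1 : μ < 1 := by rw [hμ, div_lt_one hD]; nlinarith
    refine ⟨μ, by rwa [abs_of_nonneg hμ0], ?_⟩
    rw [abs_of_nonneg hμ0]
    have e1 : a * w - μ * s = (s - a * w) / (s ^ 2 - 1) := by rw [hμ]; field_simp; ring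
    have e2 : 1 - μ = s * (s - a * w) / (s ^ 2 - 1) := by rw [hμ]; field_simp; ring
    have hmain : b ^ 2 * W * (s ^ 2 - 1) ≤ (s - a * w) ^ 2 := by
      nlinarith [sq_nonneg (a - s * w), mul_le_mul_of_nonneg_right hbW hD.le]
    rw [e1, e2, div_pow, div_pow, div_add' _ _ _ (by positivity),
      div_le_div_iff_of_pos_right (by positivity)]
    nlinarith [mul_le_mul_of_nonneg_right hmain hD.le]

lemma Convex.mem_of_norm_sub_smul_le {E : Type*} [NormedAddCommGroup E] [NormedSpace ℝ E]
    {K : Set E} (hK : Convex ℝ K) (hB : closedBall (0 : E) 1 ⊆ K) {x p : E} (hx : x ∈ K)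
    (hnx : -x ∈ K) {μ : ℝ} (hμ : |μ| < 1) (hp : ‖p - μ • x‖ ≤ 1 - |μ|) : p ∈ K := by
  wlog hμ0 : 0 ≤ μ generalizing x μ
  · exact this hnx (by rwa [neg_neg]) (by rwa [abs_neg]) (by rwa [abs_neg, neg_smul_neg])
      (by linarith)
  rw [abs_of_nonneg hμ0] at hμ hp
  have hμ1 : 0 < 1 - μ := by linarith
  set q := (1 - μ)⁻¹ • (p - μ • x)
  have hq : q ∈ closedBall (0 : E) 1 := by
    rw [mem_closedBall_zero_iff, norm_smul, norm_inv, Real.norm_of_nonneg hμ1.le,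
      inv_mul_le_one₀ hμ1]
    exact hp
  have hpq : μ • x + (1 - μ) • q = p := by
    rw [smul_inv_smul₀ hμ1.ne']; abel
  exact hpq ▸ hK hx (hB hq) hμ0 hμ1.le (by ring)

variable {E : Type*} [NormedAddCommGroup E] [InnerProductSpace ℝ E]

lemma norm_smul_add_sq_of_inner_eq_zero {u y : E} (hu : ‖u‖ = 1) (h : ⟪u, y⟫ = 0) (c : ℝ) :
    ‖c • u + y‖ ^ 2 = c ^ 2 + ‖y‖ ^ 2 := by
  rw [sq, norm_add_sq_eq_norm_sq_add_norm_sq_real (by rw [inner_smul_left, h, mul_zero]),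
    norm_smul, hu, Real.norm_eq_abs]
  simp [sq]

/-- For a unit vector `u`: multiplication by `a` along `u` and by `b` on `u`ᗮ. -/
noncomputable def stretchAlong (u : E) (a b : ℝ) : E →ₗ[ℝ] E :=
  b • LinearMap.id + (a - b) • (innerₗ E u).smulRight u

lemma stretchAlong_apply (u v : E) (a b : ℝ) :
    stretchAlong u a b v = (a * ⟪u, v⟫) • u + b • (v - ⟪u, v⟫ • u) := by
  simp only [stretchAlong, LinearMap.add_apply, LinearMap.smul_apply, LinearMap.id_apply,
    LinearMap.smulRight_apply, innerₗ_apply_apply]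
  module

lemma det_stretchAlong [FiniteDimensional ℝ E] {u : E} (hu : ‖u‖ = 1) (a b : ℝ) :
    LinearMap.det (stretchAlong u a b) = a * b ^ (finrank ℝ E - 1) := by
  classical
  obtain ⟨U, φ, hU, hφ⟩ := (orthonormal_subsingleton_iff.2 fun ⟨_, h⟩ => h ▸ hu :
    Orthonormal ℝ ((↑) : ({u} : Set E) → E)).exists_orthonormalBasis_extension
  set i₀ : U := ⟨u, hU rfl⟩
  have hinner : ∀ i j : U, ⟪(i : E), j⟫ = if i = j then 1 else 0 := by
    simpa [hφ] using orthonormal_iff_ite.1 φ.orthonormal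
  have hmat : LinearMap.toMatrix φ.toBasis φ.toBasis (stretchAlong u a b) =
      Matrix.diagonal (Function.update (fun _ => b) i₀ a) := by
    ext i j
    have hu' : u = (i₀ : E) := rfl
    rw [LinearMap.toMatrix_apply, OrthonormalBasis.coe_toBasis_repr_apply,
      OrthonormalBasis.repr_apply_apply, OrthonormalBasis.coe_toBasis, hφ, stretchAlong_apply,
      hu']
    simp only [inner_add_right, inner_smul_right, inner_sub_right, hinner, Matrix.diagonal_apply,
      Function.update_apply]
    by_cases hij : i = j <;> by_cases hi : i = i₀ <;> by_cases hj : j = i₀ <;> simp_all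
  rw [← LinearMap.det_toMatrix φ.toBasis, hmat, Matrix.det_diagonal,
    Finset.prod_update_of_mem (Finset.mem_univ _), Finset.prod_const, Finset.card_sdiff,
    Finset.card_univ, finrank_eq_card_basis φ.toBasis]
  simp

lemma stretchAlong_image_closedBall_subset {K : Set E} (hK : Convex ℝ K)
    (hB : closedBall (0 : E) 1 ⊆ K) {u : E} (hu : ‖u‖ = 1) {s a b : ℝ} (hsu : s • u ∈ K)
    (hnsu : -(s • u) ∈ K) (hs : 1 < s) (ha : 1 ≤ a) (hb : 0 < b)
    (hab : a ^ 2 + b ^ 2 * (s ^ 2 - 1) = s ^ 2) :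
    stretchAlong u a b '' closedBall 0 1 ⊆ K := by
  rintro _ ⟨z, hz, rfl⟩
  set w := ⟪u, z⟫
  set z' := z - w • u
  have hz' : ⟪u, z'⟫ = 0 := by
    simp only [z', w, inner_sub_right, inner_smul_right, real_inner_self_eq_norm_sq, hu]; ring
  have hwz : w ^ 2 + ‖z'‖ ^ 2 ≤ 1 := by
    rw [← norm_smul_add_sq_of_inner_eq_zero hu hz', add_sub_cancel]
    exact pow_le_one₀ (norm_nonneg _) (mem_closedBall_zero_iff.1 hz)
  obtain ⟨μ, hμ, hle⟩ := exists_abs_lt_one_sq_add_le hs ha hb hab (sq_nonneg ‖z'‖) hwz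
  refine hK.mem_of_norm_sub_smul_le hB hsu hnsu hμ ?_
  have hvec : stretchAlong u a b z - μ • s • u = (a * w - μ * s) • u + b • z' := by
    rw [stretchAlong_apply]; module
  have hbz' : ⟪u, b • z'⟫ = 0 := by rw [inner_smul_right, hz', mul_zero]
  rw [← sq_le_sq₀ (norm_nonneg _) (by linarith [abs_nonneg μ]), hvec,
    norm_smul_add_sq_of_inner_eq_zero hu hbz', norm_smul, mul_pow, Real.norm_eq_abs, sq_abs]
  exact hle

theorem exists_one_lt_det_image_closedBall_subset [FiniteDimensional ℝ E] {K : Set E}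
    (hK : Convex ℝ K) (hB : closedBall (0 : E) 1 ⊆ K) {x : E} (hx : x ∈ K) (hnx : -x ∈ K)
    (hlt : √(finrank ℝ E : ℝ) < ‖x‖) :
    ∃ S : E →ₗ[ℝ] E, 1 < LinearMap.det S ∧ S '' closedBall 0 1 ⊆ K := by
  set s := ‖x‖
  have hs0 : 0 < s := (Real.sqrt_nonneg _).trans_lt hlt
  have : Nontrivial E := nontrivial_of_ne x 0 (norm_pos_iff.1 hs0)
  have hds : (finrank ℝ E : ℝ) < s ^ 2 := (Real.sqrt_lt' hs0).1 hlt
  have hd1 : (1 : ℝ) ≤ finrank ℝ E := by exact_mod_cast finrank_pos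
  have hs1 : 1 < s := by nlinarith
  obtain ⟨ε, hε0, hε1, hεdet⟩ := exists_pos_lt_one_one_lt_mul_one_sub_pow
    (A := s ^ 2 - 1) (n := finrank ℝ E - 1) (by rw [Nat.cast_pred finrank_pos]; linarith)
  set u := s⁻¹ • x
  have hu : ‖u‖ = 1 := by
    rw [norm_smul, norm_inv, Real.norm_of_nonneg hs0.le, inv_mul_cancel₀ hs0.ne']
  have hsu : s • u = x := smul_inv_smul₀ hs0.ne' x
  have ha2 : √(1 + ε * (s ^ 2 - 1)) ^ 2 = 1 + ε * (s ^ 2 - 1) := Real.sq_sqrt (by nlinarith)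
  have hb2 : √(1 - ε) ^ 2 = 1 - ε := Real.sq_sqrt (by linarith)
  refine ⟨stretchAlong u √(1 + ε * (s ^ 2 - 1)) √(1 - ε), ?_,
    stretchAlong_image_closedBall_subset hK hB hu (hsu ▸ hx) (hsu ▸ hnx) hs1 ?_ ?_ ?_⟩
  · rw [det_stretchAlong hu, ← one_lt_sq_iff₀ (by positivity), mul_pow, ← pow_right_comm, ha2,
      hb2]
    exact hεdet
  · exact Real.one_le_sqrt.2 (by nlinarith)
  · exact Real.sqrt_pos.2 (by linarith)
  · rw [ha2, hb2]; ring

lemma MeasureTheory.Measure.addHaar_image_lt_image_comp {F : Type*} [NormedAddCommGroup F]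
    [NormedSpace ℝ F] [MeasurableSpace F] [BorelSpace F] [FiniteDimensional ℝ F] (μ : Measure F)
    [μ.IsAddHaarMeasure] {T S : F →ₗ[ℝ] F} (hT : LinearMap.det T ≠ 0)
    (hS : 1 < |LinearMap.det S|) {s : Set F} (h₀ : μ s ≠ 0) (h_top : μ s ≠ ⊤) :
    μ (T '' s) < μ ((T ∘ₗ S) '' s) := by
  rw [μ.addHaar_image_linearMap, μ.addHaar_image_linearMap, LinearMap.det_comp, abs_mul,
    ENNReal.mul_lt_mul_iff_left h₀ h_top, ENNReal.ofReal_lt_ofReal_iff (by positivity)]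
  exact lt_mul_of_one_lt_right (abs_pos.2 hT) hS

theorem stmt_17_general {d : ℕ} (K : Set (EuclideanSpace ℝ (Fin d)))
    (hKconv : Convex ℝ K) (hKsym : ∀ x ∈ K, -x ∈ K)
    (T : EuclideanSpace ℝ (Fin d) ≃ₗ[ℝ] EuclideanSpace ℝ (Fin d))
    (hTK : T '' Metric.closedBall 0 1 ⊆ K)
    (hmax : ∀ S : EuclideanSpace ℝ (Fin d) ≃ₗ[ℝ] EuclideanSpace ℝ (Fin d),
      S '' Metric.closedBall 0 1 ⊆ K →
        volume (S '' Metric.closedBall 0 1)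
          ≤ volume (T '' Metric.closedBall 0 1)) :
    T '' Metric.closedBall 0 1 ⊆ K ∧
      K ⊆ Real.sqrt d • (T '' Metric.closedBall 0 1) := by
  refine ⟨hTK, fun y hy => ?_⟩
  have hnorm : ‖T.symm y‖ ≤ √d := by
    by_contra! hlt
    obtain ⟨S, hdet, hSK⟩ := exists_one_lt_det_image_closedBall_subset
      (hKconv.linear_preimage T.toLinearMap) (Set.image_subset_iff.1 hTK)
      (x := T.symm y) (by simpa) (by simpa using hKsym y hy)
      (by simpa [finrank_euclideanSpace] using hlt)
    let R := (S.equivOfDetNeZero (by positivity)).trans T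
    have hRK : R '' closedBall 0 1 ⊆ K := by
      rintro _ ⟨z, hz, rfl⟩
      exact hSK ⟨z, hz, rfl⟩
    refine (hmax R hRK).not_gt ?_
    exact Measure.addHaar_image_lt_image_comp volume T.isUnit_det'.ne_zero
      (hdet.trans_le (le_abs_self _)) (measure_closedBall_pos _ _ one_pos).ne'
      measure_closedBall_lt_top.ne
  rw [← image_smul_set, smul_unitClosedBall_of_nonneg (Real.sqrt_nonneg _)]
  exact ⟨T.symm y, mem_closedBall_zero_iff.2 hnorm, T.apply_symm_apply y⟩

/-- John's theorem for symmetric convex bodies: if `E = T(B(0,1))` is the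
ellipsoid of maximal volume contained in the symmetric convex body `K ⊂ ℝ^d`,
then `E ⊆ K ⊆ √d · E`. -/
theorem stmt_17 {d : ℕ} (hd : 0 < d) (K : Set (EuclideanSpace ℝ (Fin d)))
    (hKc : IsCompact K) (hKconv : Convex ℝ K) (hKsym : ∀ x ∈ K, -x ∈ K)
    (hK0 : (0 : EuclideanSpace ℝ (Fin d)) ∈ interior K)
    (T : EuclideanSpace ℝ (Fin d) ≃ₗ[ℝ] EuclideanSpace ℝ (Fin d))
    (hTK : T '' Metric.closedBall 0 1 ⊆ K)
    (hmax : ∀ S : EuclideanSpace ℝ (Fin d) ≃ₗ[ℝ] EuclideanSpace ℝ (Fin d),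
      S '' Metric.closedBall 0 1 ⊆ K →
        volume (S '' Metric.closedBall 0 1)
          ≤ volume (T '' Metric.closedBall 0 1)) :
    T '' Metric.closedBall 0 1 ⊆ K ∧
      K ⊆ Real.sqrt d • (T '' Metric.closedBall 0 1) :=
  stmt_17_general K hKconv hKsym T hTK hmax
end
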